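/- Let u, v ∈ ℝ, set ρ² = u² + v², and let λ_2 > 0 and F > 0 be real numbers with ρ² F < 1. Define the symmetric 2×2 matrices G = F·Id and Ḡ = (F / (λ_2 (λ_2 − λ_2 ρ² F)²)) · [[1 − F v², F u v], [F u v, 1 − F u²]]. Then G and Ḡ are positive definite, and the eigenvalues of the matrix L(G,Ḡ) = (det Ḡ / det G)^{1/3} Ḡ⁻¹ G are λ_2 − λ_2 ρ² F and λ_2. -/

import Mathlib

/-!
Write `w = (u, v)` and `w⊥ = (v, -u)`. The matrix in `Ḡ` is `M = 1 - F w⊥ w⊥ᵀ`, positive definite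
with `det M = 1 - ρ² F`, and its adjugate is `1 - F w wᵀ`. Since `G` is scalar, `L` is a multiple
of `Ḡ⁻¹`, hence of `adj M`, and the normalising factor of `Ḡ` makes the cube root of
`det Ḡ / det G` turn that multiple into exactly `λ₂`: `L = λ₂ (1 - F w wᵀ)`, which acts as `λ₂` on
`w⊥` and as `λ₂ (1 - ρ² F)` on `w`.
-/

open Polynomial

/-- `L(G,Ḡ) = (det Ḡ / det G)^{1/3} · Ḡ⁻¹ G` for real `2×2` matrices (the case
`n = 2` of `L = (det ḡ/det g)^{1/(n+1)} ḡ⁻¹ g`). -/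
noncomputable def Lmat2 (G Gb : Matrix (Fin 2) (Fin 2) ℝ) : Matrix (Fin 2) (Fin 2) ℝ :=
  ((Gb.det / G.det) ^ ((3 : ℝ))⁻¹) • (Gb⁻¹ * G)

namespace Matrix

theorem posDef_fin_two_of_det_pos {a b d : ℝ} (ha : 0 < a) (hdet : 0 < a * d - b ^ 2) :
    (!![a, b; b, d] : Matrix (Fin 2) (Fin 2) ℝ).PosDef := by
  refine PosDef.of_dotProduct_mulVec_pos ?_ fun x hx => ?_
  · ext i j
    fin_cases i <;> fin_cases j <;> rfl
  simp only [star_trivial, dotProduct, mulVec, Fin.sum_univ_two, of_apply, cons_val',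
    cons_val_zero, cons_val_one, empty_val', cons_val_fin_one]
  have hsq : a * (x 0 * (a * x 0 + b * x 1) + x 1 * (b * x 0 + d * x 1))
      = (a * x 0 + b * x 1) ^ 2 + (a * d - b ^ 2) * x 1 ^ 2 := by ring
  have hpos : 0 < (a * x 0 + b * x 1) ^ 2 + (a * d - b ^ 2) * x 1 ^ 2 := by
    by_cases h1 : x 1 = 0
    · have h0 : x 0 ≠ 0 := fun h0 => hx (funext fun i => by fin_cases i <;> simp [h0, h1])
      rw [h1, mul_zero, add_zero, zero_pow two_ne_zero, mul_zero, add_zero]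
      exact sq_pos_of_ne_zero (mul_ne_zero ha.ne' h0)
    · positivity
  exact (mul_pos_iff_of_pos_left ha).mp (hsq ▸ hpos)

theorem charpoly_fin_two_eq_mul {R : Type*} [CommRing R] [Nontrivial R]
    (A : Matrix (Fin 2) (Fin 2) R) {a b : R} (htr : A.trace = a + b) (hdet : A.det = a * b) :
    A.charpoly = (X - C a) * (X - C b) := by
  rw [charpoly_fin_two, htr, hdet, C_add, C_mul]
  ring

end Matrix

open Matrix

theorem Lmat2_smul_one_smul {F c r : ℝ} (hF : F ≠ 0) (hc : c ≠ 0) (hr : 0 ≤ r)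
    {M : Matrix (Fin 2) (Fin 2) ℝ} (hM : M.det ≠ 0) (hratio : c ^ 2 * M.det / F ^ 2 = r ^ 3) :
    Lmat2 (F • 1) (c • M) = (r * F / (c * M.det)) • M.adjugate := by
  have hcube : ((c • M).det / (F • (1 : Matrix (Fin 2) (Fin 2) ℝ)).det) ^ ((3 : ℝ))⁻¹ = r := by
    rw [det_smul, det_smul, det_one, Fintype.card_fin, mul_one, hratio,
      show ((3 : ℝ))⁻¹ = ((3 : ℕ) : ℝ)⁻¹ by norm_num]
    exact Real.pow_rpow_inv_natCast hr (by norm_num)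
  have hinv : (c • M)⁻¹ = (c * M.det)⁻¹ • M.adjugate := by
    refine inv_eq_left_inv ?_
    rw [smul_mul, Matrix.mul_smul, adjugate_mul, smul_smul, smul_smul, mul_assoc,
      inv_mul_cancel₀ (mul_ne_zero hc hM), one_smul]
  rw [Lmat2, hcube, hinv, smul_mul, Matrix.mul_smul, mul_one, smul_smul, smul_smul]
  congr 1
  field_simp

theorem stmt14 (u v F l2 : ℝ) (hF : 0 < F) (hl2 : 0 < l2)
    (hsmall : (u ^ 2 + v ^ 2) * F < 1)
    (G Gb : Matrix (Fin 2) (Fin 2) ℝ)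
    (hG : G = F • (1 : Matrix (Fin 2) (Fin 2) ℝ))
    (hGb : Gb = (F / (l2 * (l2 - l2 * (u ^ 2 + v ^ 2) * F) ^ 2)) •
      !![1 - F * v ^ 2, F * u * v; F * u * v, 1 - F * u ^ 2]) :
    G.PosDef ∧ Gb.PosDef ∧
    (Lmat2 G Gb).charpoly =
      (X - C (l2 - l2 * (u ^ 2 + v ^ 2) * F)) * (X - C l2) := by
  set M : Matrix (Fin 2) (Fin 2) ℝ := !![1 - F * v ^ 2, F * u * v; F * u * v, 1 - F * u ^ 2]
  have hs : 0 < 1 - (u ^ 2 + v ^ 2) * F := by linarith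
  have hdetM : M.det = 1 - (u ^ 2 + v ^ 2) * F := by rw [det_fin_two_of]; ring
  have hMpd : M.PosDef := posDef_fin_two_of_det_pos (by nlinarith [sq_nonneg u]) (by nlinarith)
  rw [show l2 - l2 * (u ^ 2 + v ^ 2) * F = l2 * (1 - (u ^ 2 + v ^ 2) * F) by ring] at hGb ⊢
  have hc : 0 < F / (l2 * (l2 * (1 - (u ^ 2 + v ^ 2) * F)) ^ 2) := by positivity
  refine ⟨hG ▸ PosDef.one.smul hF, hGb ▸ hMpd.smul hc, ?_⟩
  have hL : Lmat2 G Gb = l2 • M.adjugate := by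
    rw [hG, hGb, Lmat2_smul_one_smul hF.ne' hc.ne' (r := (l2 ^ 2 * (1 - (u ^ 2 + v ^ 2) * F))⁻¹)
      (by positivity) hMpd.det_pos.ne' ?ratio]
    case ratio => rw [hdetM]; field_simp
    congr 1
    rw [hdetM]
    field_simp
  rw [hL]
  apply charpoly_fin_two_eq_mul
  · rw [trace_smul, adjugate_fin_two_of, trace_fin_two_of, smul_eq_mul]; ring
  · rw [det_smul, det_adjugate, hdetM, Fintype.card_fin]; ring
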